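/- Let (P_i : A ⥤ B_i)_{i : ι} be a family of functors from a category A to categories B_i, and let Q : A ⥤ Π_{i : ι} B_i be the induced functor into the product category. Then the family (P_i) is jointly conservative if and only if the canonical comparison functor from A into the pseudo-pullback of c_{ΠB} : Π_{i} B_i ⥤ (Π_{i} B_i)^𝟚 and Q^𝟚 : A^𝟚 ⥤ (Π_{i} B_i)^𝟚 is an equivalence of categories. -/

import Mathlib

open CategoryTheory

universe v₁ v₂ u₁ u₂

/-- The functor `c_A : A ⥤ Arrow A` sending an object to its identity arrow. -/
def idArrowFunctor (A : Type u₁) [Category.{v₁} A] : A ⥤ Arrow A where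
  obj a := Arrow.mk (𝟙 a)
  map {a a'} x := Arrow.homMk (u := x) (v := x) (by simp)

variable {A : Type u₁} {B : Type u₂} [Category.{v₁} A] [Category.{v₂} B]

/-- The pseudo-pullback of `c_B : B ⥤ B^𝟚` and `f^𝟚 : A^𝟚 ⥤ B^𝟚`, realized as the full
subcategory of the comma category `(c_B ↓ f^𝟚)` spanned by the objects whose structural
morphism is an isomorphism. -/
abbrev PseudoPullback (f : A ⥤ B) :=
  ObjectProperty.FullSubcategory (fun X : Comma (idArrowFunctor B) f.mapArrow => IsIso X.hom)

/-- The canonical comparison functor `r : A ⥤ P`. -/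
def comparison (f : A ⥤ B) : A ⥤ PseudoPullback f where
  obj a :=
    ⟨{ left := f.obj a
       right := Arrow.mk (𝟙 a)
       hom := (Arrow.isoMk (f := (idArrowFunctor B).obj (f.obj a))
         (g := f.mapArrow.obj (Arrow.mk (𝟙 a))) (Iso.refl _) (Iso.refl _) (by simp [idArrowFunctor, Functor.mapArrow])).hom },
      inferInstance⟩
  map {a a'} x :=
    InducedCategory.homMk
    { left := f.map x
      right := Arrow.homMk (u := x) (v := x) (by simp)
      w := by ext <;> exact (Category.comp_id (f.map x)).trans (Category.id_comp (f.map x)).symm }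

/-- The functor `u : P ⥤ A` sending `(b, g, φ)` to the domain of `g`. -/
def pbProj (f : A ⥤ B) : PseudoPullback f ⥤ A where
  obj X := X.obj.right.left
  map g := g.hom.right.left

theorem comparison_comp_pbProj (f : A ⥤ B) : comparison f ⋙ pbProj f = 𝟭 A := rfl

theorem conservative_iff_comparison (f : A ⥤ B) :
    (∀ {a a' : A} (g : a ⟶ a'), IsIso (f.map g) → IsIso g) ↔ (comparison f).IsEquivalence := by
  constructor
  · intro hcons
    have faithful : (comparison f).Faithful :=
      Functor.Faithful.of_comp_eq (comparison_comp_pbProj f)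
    have full : (comparison f).Full := by
      constructor
      intro a a' h
      refine ⟨h.hom.right.left, ?_⟩
      have h1 : h.hom.right.right = h.hom.right.left :=
        (((Category.comp_id h.hom.right.left).symm.trans h.hom.right.w).trans
          (Category.id_comp h.hom.right.right)).symm
      have h2 : h.hom.left = f.map h.hom.right.left := by
        have this : h.hom.left ≫ 𝟙 (f.obj a') = 𝟙 (f.obj a) ≫ f.map h.hom.right.right :=
          congrArg CommaMorphism.right h.hom.w
        rw [← h1]
        exact (Category.comp_id _).symm.trans (this.trans (Category.id_comp _))
      apply InducedCategory.hom_ext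
      apply CommaMorphism.ext
      · exact h2.symm
      · apply CommaMorphism.ext
        · rfl
        · exact h1.symm
    have essSurj : (comparison f).EssSurj := by
      constructor
      intro X
      obtain ⟨X, hX⟩ := X
      haveI : IsIso X.hom := hX
      have hw : X.hom.left ≫ f.map X.right.hom = X.hom.right :=
        X.hom.w.trans (Category.id_comp X.hom.right)
      haveI : IsIso X.hom.left := Arrow.isIso_left X.hom
      haveI : IsIso X.hom.right := Arrow.isIso_right X.hom
      have hl : IsIso X.hom.left := Arrow.isIso_left X.hom
      have hr : IsIso X.hom.right := Arrow.isIso_right X.hom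
      haveI : IsIso (f.map X.right.hom) :=
        @IsIso.of_isIso_comp_left _ _ _ _ _ X.hom.left (f.map X.right.hom) hl (hw ▸ hr)
      haveI : IsIso X.right.hom := hcons X.right.hom this
      refine ⟨X.right.left, ⟨(ObjectProperty.ι _).preimageIso ?_⟩⟩
      refine Comma.isoMk ((asIso X.hom.left).symm) ?_ ?_
      · exact Arrow.isoMk (Iso.refl _) (@asIso _ _ _ _ X.right.hom this)
          (by exact (Category.id_comp _).trans (Category.id_comp _).symm)
      · apply CommaMorphism.ext
        · show inv X.hom.left ≫ X.hom.left = 𝟙 _ ≫ f.map (𝟙 _)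
          simp
          rfl
        · show inv X.hom.left ≫ X.hom.right = 𝟙 _ ≫ f.map X.right.hom
          rw [Category.id_comp, ← hw]
          exact (asIso X.hom.left).inv_hom_id_assoc _
    exact ⟨faithful, full, essSurj⟩
  · intro heq a a' g hg
    haveI := heq
    haveI : (comparison f).EssSurj := Functor.IsEquivalence.essSurj
    let X : PseudoPullback f :=
      ⟨{ left := f.obj a
         right := Arrow.mk g
         hom := (Arrow.isoMk (f := (idArrowFunctor B).obj (f.obj a))
           (g := f.mapArrow.obj (Arrow.mk g)) (Iso.refl _) (@asIso _ _ _ _ (f.map g) hg)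
           (by simp [idArrowFunctor, Functor.mapArrow])).hom },
       inferInstance⟩
    let ψ := (ObjectProperty.ι _).mapIso ((comparison f).objObjPreimageIso X)
    haveI : IsIso ψ.hom := ψ.isIso_hom
    haveI : IsIso ψ.hom.right := inferInstance
    haveI : IsIso ψ.hom.right.left := inferInstance
    haveI : IsIso ψ.hom.right.right := inferInstance
    have hw : ψ.hom.right.left ≫ g = ψ.hom.right.right :=
      ψ.hom.right.w.trans (Category.id_comp ψ.hom.right.right)
    rw [show g = inv ψ.hom.right.left ≫ ψ.hom.right.right by rw [← hw]; simp]
    exact ((asIso ψ.hom.right.left).symm ≪≫ @asIso _ _ _ _ ψ.hom.right.right this).isIso_hom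

universe w u₃ v₃

/-- A family of functors `P i : A ⥤ B i` is jointly conservative if and only if the canonical
comparison functor from `A` into the pseudo-pullback of `c_{ΠB}` and `Q^𝟚`, where
`Q : A ⥤ Π i, B i` is the induced functor, is an equivalence of categories. -/
theorem jointly_conservative_iff_comparison_isEquivalence
    {ι : Type w} {A : Type u₁} [Category.{v₁} A]
    {B : ι → Type u₃} [∀ i, Category.{v₃} (B i)] (P : ∀ i, A ⥤ B i) :
    (∀ {a a' : A} (g : a ⟶ a'), (∀ i, IsIso ((P i).map g)) → IsIso g) ↔
      (comparison (Functor.pi' P)).IsEquivalence := by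
  rw [← conservative_iff_comparison]
  constructor
  · intro h a a' g hg
    refine h g (fun i => ?_)
    have : (P i).map g = (Functor.pi' P).map g i := rfl
    rw [this]
    exact ((isIso_pi_iff _).1 hg) i
  · intro h a a' g hg
    refine h g ?_
    rw [isIso_pi_iff]
    exact hg
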